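/- arXiv:1301.2691 — 2 statements merged into one kernel-verified Lean document; each statement's English description precedes it below -/
import Mathlib

section
/- Under the same hypotheses, the set R of final residues is a union of orbits of the permutation x ↦ x·b^t + s on Z/pZ. -/
/-! Since `φ` intertwines the letter `g` with `g'`, the equality `φ (s, t) = φ (0, 0)` survives
reading `g^x`. By the definition of `mpG` this gives `φ (s + x·b^t, t) = φ (x, 0)`, i.e.
`φ (j_{s,t} x, t) = φ (x, 0)`. As finality depends only on the residue, `x ∈ R ↔ j_{s,t} x ∈ R`,
and a set that is mapped into itself by `j_{s,t}` is the union of the forward orbits of its points. -/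

/-- Action of letter `0` in the modified Pascal automaton: `(s,t) ↦ (s, t+1)`. -/
def mpZero (p ψ : ℕ) (q : ZMod p × ZMod ψ) : ZMod p × ZMod ψ := (q.1, q.2 + 1)

/-- Action of letter `g` in the modified Pascal automaton: `(s,t) ↦ (s + b^t, t)`. -/
def mpG (b p ψ : ℕ) (q : ZMod p × ZMod ψ) : ZMod p × ZMod ψ :=
  (q.1 + (b : ZMod p) ^ q.2.val, q.2)

/-- The permutation `j_{s,t} : x ↦ x·b^t + s` of `Z/pZ`. -/
def jST (b p ψ : ℕ) (s : ZMod p) (t : ZMod ψ) (x : ZMod p) : ZMod p :=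
  x * (b : ZMod p) ^ t.val + s

theorem Set.eq_biUnion_iterate_of_mapsTo {α : Type*} {f : α → α} {s : Set α}
    (h : Set.MapsTo f s s) : s = ⋃ x ∈ s, {y | ∃ n : ℕ, y = f^[n] x} := by
  refine Set.Subset.antisymm (fun x hx => Set.mem_biUnion hx ⟨0, rfl⟩) ?_
  rintro y hy
  obtain ⟨x, hx, n, rfl⟩ := Set.mem_iUnion₂.mp hy
  exact h.iterate n hx

theorem mpG_iterate (b p ψ n : ℕ) (a : ZMod p) (u : ZMod ψ) :
    (mpG b p ψ)^[n] (a, u) = (a + n * (b : ZMod p) ^ u.val, u) := by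
  induction n with
  | zero => simp
  | succ n ih =>
    rw [Function.iterate_succ_apply', ih, mpG]
    push_cast
    ring_nf

theorem jST_mem_iff {b p ψ : ℕ} [NeZero p] {Q : Type*} {g : Q → Q} {F : Set Q}
    {R : Set (ZMod p)} {φ : ZMod p × ZMod ψ → Q} (hg : Function.Semiconj φ (mpG b p ψ) g)
    (hF : ∀ q : ZMod p × ZMod ψ, q.1 ∈ R ↔ φ q ∈ F) {s : ZMod p} {t : ZMod ψ}
    (hst : φ (s, t) = φ (0, 0)) (x : ZMod p) :
    jST b p ψ s t x ∈ R ↔ x ∈ R := by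
  have hread : φ ((mpG b p ψ)^[x.val] (s, t)) = φ ((mpG b p ψ)^[x.val] (0, 0)) := by
    rw [(hg.iterate_right _).eq, (hg.iterate_right _).eq, hst]
  rw [mpG_iterate, mpG_iterate] at hread
  simp only [ZMod.natCast_zmod_val, ZMod.val_zero, pow_zero, mul_one, zero_add] at hread
  rw [hF (jST b p ψ s t x, t), hF (x, 0), jST, add_comm, hread]

theorem residues_union_of_orbits_general (b p ψ : ℕ) (hp : 1 ≤ p)
    (R : Set (ZMod p))
    {Q' : Type} (g' : Q' → Q') (F' : Set Q')
    (φ : ZMod p × ZMod ψ → Q')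
    (hg : ∀ q, φ (mpG b p ψ q) = g' (φ q))
    (hF : ∀ q : ZMod p × ZMod ψ, q.1 ∈ R ↔ φ q ∈ F')
    (s : ZMod p) (t : ZMod ψ)
    (hst : φ (s, t) = φ (0, 0)) :
    R = ⋃ x ∈ R, {y : ZMod p | ∃ n : ℕ, y = (jST b p ψ s t)^[n] x} := by
  have : NeZero p := NeZero.of_pos hp
  exact Set.eq_biUnion_iterate_of_mapsTo fun x hx => (jST_mem_iff hg hF hst x).mpr hx

/-- Under the same hypotheses as for the orbit description of the class of
`(0,0)`, the set `R` of final residues is a union of orbits of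
`j_{s,t} : x ↦ x·b^t + s` on `Z/pZ`. -/
theorem residues_union_of_orbits (b p ψ : ℕ) (hb : 2 ≤ b) (hp : 1 ≤ p)
    (hcop : Nat.Coprime b p) (hψ : ψ = orderOf (b : ZMod p))
    (R : Set (ZMod p))
    (hcan : ∀ q : ℕ, 0 < q → q < p →
      ∃ n : ℕ, ¬ (((n : ZMod p) ∈ R) ↔ (((n + q : ℕ) : ZMod p) ∈ R)))
    {Q' : Type} (z' g' : Q' → Q') (F' : Set Q')
    (φ : ZMod p × ZMod ψ → Q')
    (hsurj : Function.Surjective φ)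
    (hz : ∀ q, φ (mpZero p ψ q) = z' (φ q))
    (hg : ∀ q, φ (mpG b p ψ q) = g' (φ q))
    (hF : ∀ q : ZMod p × ZMod ψ, q.1 ∈ R ↔ φ q ∈ F')
    (s : ZMod p) (t : ZMod ψ)
    (hst : φ (s, t) = φ (0, 0)) (ht : t ≠ 0)
    (hmin : ∀ (x : ZMod p) (y : ZMod ψ),
      φ (x, y) = φ (0, 0) → y ≠ 0 → t.val ≤ y.val) :
    R = ⋃ x ∈ R, {y : ZMod p | ∃ n : ℕ, y = (jST b p ψ s t)^[n] x} :=
  residues_union_of_orbits_general b p ψ hp R g' F' φ hg hF s t hst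
end

section
/- Let A be a deterministic automaton whose states, apart from a finite initial part, lie in a single strongly connected component S accepting, when started from the entry state j, the periodic set {n : n mod p ∈ R}. If u is the unique word leading from the initial state i to j and every accepted word factors as w = u·v with v accepted by S_j, then the set of numbers accepted by A is ultimately periodic with period p·b^{|u|}. -/
/-! Every accepted word is `u ++ v` with `v` accepted by `S_j`, so the accepted numbers are exactly
`val u + b^|u| * m` with `m mod p ∈ R`. Since `val u < b^|u|`, adding `p * b^|u|` to such a number
amounts to adding `p` to `m`, which does not change `m mod p`; the set is in fact purely periodic. -/

/-- Value of a word of digits, read least-significant-digit-first. -/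
def wordVal (b : ℕ) : List ℕ → ℕ
  | [] => 0
  | a :: u => a + b * wordVal b u

theorem wordVal_eq_ofDigits (b : ℕ) : wordVal b = Nat.ofDigits b := by
  funext w
  induction w with
  | nil => rfl
  | cons a w ih => rw [wordVal, ih, Nat.ofDigits_cons]

theorem exists_eq_add_mul_add_period_iff {p B c : ℕ} (R : Set (ZMod p)) (hc : c < B) (n : ℕ) :
    (∃ m, n + p * B = c + B * m ∧ (m : ZMod p) ∈ R) ↔ ∃ m, n = c + B * m ∧ (m : ZMod p) ∈ R := by
  constructor
  · rintro ⟨m, hm, hR⟩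
    have hpm : p ≤ m := by
      by_contra! hmp
      have : B * (m + 1) ≤ B * p := Nat.mul_le_mul_left B hmp
      nlinarith
    obtain ⟨k, rfl⟩ := Nat.exists_eq_add_of_le hpm
    refine ⟨k, by nlinarith, ?_⟩
    simpa using hR
  · rintro ⟨m, rfl, hR⟩
    exact ⟨m + p, by ring, by simpa using hR⟩

theorem accepts_iff_exists_eq_add_mul {b p : ℕ} {R : Set (ZMod p)} {Q : Type} {δ : Q → ℕ → Q}
    {i j : Q} {F : Set Q} {u : List ℕ} (hu : ∀ a ∈ u, a < b) (hj : List.foldl δ i u = j)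
    (hfactor : ∀ w : List ℕ, List.foldl δ i w ∈ F →
      ∃ v : List ℕ, w = u ++ v ∧ List.foldl δ j v ∈ F)
    (hSj : ∀ n : ℕ, ((n : ZMod p) ∈ R) ↔
      ∃ v : List ℕ, (∀ a ∈ v, a < b) ∧ wordVal b v = n ∧ List.foldl δ j v ∈ F) (n : ℕ) :
    (∃ w : List ℕ, (∀ a ∈ w, a < b) ∧ wordVal b w = n ∧ List.foldl δ i w ∈ F) ↔
      ∃ m : ℕ, n = wordVal b u + b ^ u.length * m ∧ (m : ZMod p) ∈ R := by
  simp only [wordVal_eq_ofDigits] at hSj ⊢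
  constructor
  · rintro ⟨w, hw, rfl, hacc⟩
    obtain ⟨v, rfl, hvacc⟩ := hfactor w hacc
    refine ⟨Nat.ofDigits b v, Nat.ofDigits_append, ?_⟩
    exact (hSj _).2 ⟨v, fun a ha => hw a (List.mem_append_right u ha), rfl, hvacc⟩
  · rintro ⟨m, rfl, hm⟩
    obtain ⟨v, hv, rfl, hvacc⟩ := (hSj m).1 hm
    refine ⟨u ++ v, ?_, Nat.ofDigits_append, by rwa [List.foldl_append, hj]⟩
    intro a ha
    exact (List.mem_append.1 ha).elim (hu a) (hv a)

theorem branch_accepts_ultimately_periodic_general (b p : ℕ) (hb : 2 ≤ b)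
    (R : Set (ZMod p))
    {Q : Type} (δ : Q → ℕ → Q) (i : Q) (F : Set Q)
    (u : List ℕ) (hu : ∀ a ∈ u, a < b)
    (j : Q) (hj : List.foldl δ i u = j)
    -- every accepted word factors through `u` and `S_j`
    (hfactor : ∀ w : List ℕ, List.foldl δ i w ∈ F →
      ∃ v : List ℕ, w = u ++ v ∧ List.foldl δ j v ∈ F)
    -- `S_j` accepts exactly the numbers `{n | n mod p ∈ R}`
    (hSj : ∀ n : ℕ, ((n : ZMod p) ∈ R) ↔
      ∃ v : List ℕ, (∀ a ∈ v, a < b) ∧ wordVal b v = n ∧ List.foldl δ j v ∈ F) :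
    ∃ m : ℕ, ∀ n : ℕ, m ≤ n →
      ((∃ w : List ℕ, (∀ a ∈ w, a < b) ∧ wordVal b w = n ∧ List.foldl δ i w ∈ F) ↔
       (∃ w : List ℕ, (∀ a ∈ w, a < b) ∧ wordVal b w = n + p * b ^ u.length ∧
          List.foldl δ i w ∈ F)) := by
  have hval : wordVal b u < b ^ u.length := by
    rw [wordVal_eq_ofDigits]
    exact Nat.ofDigits_lt_base_pow_length hb hu
  refine ⟨0, fun n _ => ?_⟩
  simp only [accepts_iff_exists_eq_add_mul hu hj hfactor hSj]
  exact (exists_eq_add_mul_add_period_iff R hval n).symm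

/-- Let `A` be a deterministic automaton over the digit alphabet whose accepted
words all factor as `u·v` where `u` is the unique word leading from the initial
state `i` to the entry state `j` of the strongly connected part `S`, and where
the subautomaton `S_j` (started at `j`) accepts exactly the numbers
`{n | n mod p ∈ R}`.  Then the set of numbers accepted by `A` is ultimately
periodic with period `p·b^{|u|}`. -/
theorem branch_accepts_ultimately_periodic (b p : ℕ) (hb : 2 ≤ b) (hp : 1 ≤ p)
    (R : Set (ZMod p))
    {Q : Type} (δ : Q → ℕ → Q) (i : Q) (F : Set Q)
    (u : List ℕ) (hu : ∀ a ∈ u, a < b)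
    (j : Q) (hj : List.foldl δ i u = j)
    -- every accepted word factors through `u` and `S_j`
    (hfactor : ∀ w : List ℕ, List.foldl δ i w ∈ F →
      ∃ v : List ℕ, w = u ++ v ∧ List.foldl δ j v ∈ F)
    -- `S_j` accepts exactly the numbers `{n | n mod p ∈ R}`
    (hSj : ∀ n : ℕ, ((n : ZMod p) ∈ R) ↔
      ∃ v : List ℕ, (∀ a ∈ v, a < b) ∧ wordVal b v = n ∧ List.foldl δ j v ∈ F) :
    ∃ m : ℕ, ∀ n : ℕ, m ≤ n →
      ((∃ w : List ℕ, (∀ a ∈ w, a < b) ∧ wordVal b w = n ∧ List.foldl δ i w ∈ F) ↔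
       (∃ w : List ℕ, (∀ a ∈ w, a < b) ∧ wordVal b w = n + p * b ^ u.length ∧
          List.foldl δ i w ∈ F)) :=
  branch_accepts_ultimately_periodic_general b p hb R δ i F u hu j hj hfactor hSj
end
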